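/- arXiv:2012.00528 — 6 statements merged into one kernel-verified Lean document; each statement's English description precedes it below -/
import Mathlib

section
/- There exists c₀ > 0 such that for every c ≥ c₀ there is a constant C with Σ_{m > M(n)} P(T_n = m) ≤ C/n for all n ≥ 3, where M(n) := c·n·(log n)/(log log 3n). -/
/-! Chernoff bound with `t = log log 3n / (2n)`. Each summand `k Z_k` has moment generating
function `1 + (e^{tk} - 1)/k ≤ exp (t e^{tn})`, so `E e^{t T_n} ≤ exp (n t e^{tn})`; since
`u := tn = (log log 3n)/2`, this exponent is `u e^u ≤ e^{2u} = log 3n`, giving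
`E e^{t T_n} ≤ 3n ≤ n²`. Together with `e^{-t M(n)} = n^{-c/2}`, Markov's inequality bounds the
tail by `n^{2 - c/2} ≤ 1/n` once `c ≥ 6`. -/

open MeasureTheory ProbabilityTheory Filter Finset

/-- `T n = ∑_{1 ≤ k ≤ n} k · Z k`. -/
def T {Ω : Type*} (Z : ℕ → Ω → ℕ) (n : ℕ) (ω : Ω) : ℕ :=
  ∑ k ∈ Finset.Icc 1 n, k * Z k ω

/-- `M n = c·n·(log n)/(log log 3n)`. -/
noncomputable def Mfun (c : ℝ) (n : ℕ) : ℝ :=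
  c * n * Real.log n / Real.log (Real.log (3 * n))

open Real

section TwoValued

variable {Ω : Type*} [MeasurableSpace Ω] {μ : Measure Ω}

lemma ae_eq_zero_or_eq_one_of_measure_add_eq_one [IsProbabilityMeasure μ] {X : Ω → ℕ}
    (hX : Measurable X) (h : μ {ω | X ω = 0} + μ {ω | X ω = 1} = 1) :
    ∀ᵐ ω ∂μ, X ω = 0 ∨ X ω = 1 := by
  have h0 : MeasurableSet {ω | X ω = 0} := hX (measurableSet_singleton 0)
  have h1 : MeasurableSet {ω | X ω = 1} := hX (measurableSet_singleton 1)
  have hunion : {ω | X ω = 0 ∨ X ω = 1} = {ω | X ω = 0} ∪ {ω | X ω = 1} := Set.ofPred_or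
  rw [ae_iff_measure_eq (by rw [hunion]; exact (h0.union h1).nullMeasurableSet), measure_univ,
    hunion, measure_union _ h1, h]
  exact Set.disjoint_left.2 fun ω (h0 : X ω = 0) (h1 : X ω = 1) => by omega

lemma exp_mul_ae_eq_indicator {X : Ω → ℕ} (hX01 : ∀ᵐ ω ∂μ, X ω = 0 ∨ X ω = 1) (a t : ℝ) :
    (fun ω => exp (t * (a * X ω))) =ᵐ[μ]
      {ω | X ω = 0}.indicator 1 + {ω | X ω = 1}.indicator (fun _ => exp (t * a)) := by
  filter_upwards [hX01] with ω hω
  rcases hω with h | h <;> simp [h]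

variable [IsFiniteMeasure μ] {X : Ω → ℕ}

lemma integrable_exp_mul_of_ae_zero_or_one (hX : Measurable X)
    (hX01 : ∀ᵐ ω ∂μ, X ω = 0 ∨ X ω = 1) (a t : ℝ) :
    Integrable (fun ω => exp (t * (a * X ω))) μ :=
  (((integrable_const 1).indicator (hX (measurableSet_singleton 0))).add
    ((integrable_const _).indicator (hX (measurableSet_singleton 1)))).congr
    (exp_mul_ae_eq_indicator hX01 a t).symm

lemma mgf_mul_of_ae_zero_or_one (hX : Measurable X)
    (hX01 : ∀ᵐ ω ∂μ, X ω = 0 ∨ X ω = 1) (a t : ℝ) :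
    mgf (fun ω => a * X ω) μ t = μ.real {ω | X ω = 0} + exp (t * a) * μ.real {ω | X ω = 1} := by
  have h0 : MeasurableSet {ω | X ω = 0} := hX (measurableSet_singleton 0)
  have h1 : MeasurableSet {ω | X ω = 1} := hX (measurableSet_singleton 1)
  rw [mgf, integral_congr_ae (exp_mul_ae_eq_indicator hX01 a t),
    integral_add' ((integrable_const _).indicator h0) ((integrable_const _).indicator h1),
    Pi.one_def, integral_indicator_const _ h0, integral_indicator_const _ h1]
  simp [mul_comm]

lemma tsum_measureReal_eq_measureReal_lt (hX : Measurable X) (M : ℝ) :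
    (∑' m : ℕ, if M < (m : ℝ) then μ.real {ω | X ω = m} else 0) = μ.real {ω | M < X ω} := by
  have h := tsum_measure_preimage_singleton (μ := μ) (Set.to_countable {m : ℕ | M < m})
    fun m _ => hX (measurableSet_singleton m)
  rw [_root_.tsum_subtype {m : ℕ | M < m} fun m => μ (X ⁻¹' {m})] at h
  rw [measureReal_def, show {ω | M < X ω} = X ⁻¹' {m : ℕ | M < m} from rfl, ← h,
    ENNReal.tsum_toReal_eq fun m => by by_cases hm : M < m <;> simp [hm]]
  congr with m
  by_cases hm : M < m <;> simp [hm, measureReal_def, Set.preimage, Set.indicator]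

end TwoValued

lemma exp_sub_one_le_mul_exp (x : ℝ) : exp x - 1 ≤ x * exp x := by
  have h := add_one_le_exp (-x)
  have hinv : exp (-x) * exp x = 1 := by rw [← exp_add]; simp
  nlinarith [exp_pos x]

lemma one_sub_inv_add_exp_mul_inv_le {k n t : ℝ} (hk : 0 < k) (hkn : k ≤ n) (ht : 0 ≤ t) :
    1 - k⁻¹ + exp (t * k) * k⁻¹ ≤ exp (t * exp (t * n)) := by
  have hdiv : (exp (t * k) - 1) * k⁻¹ ≤ t * exp (t * n) := by
    rw [← div_eq_mul_inv, div_le_iff₀ hk]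
    calc exp (t * k) - 1 ≤ t * k * exp (t * k) := exp_sub_one_le_mul_exp _
      _ ≤ t * k * exp (t * n) := by gcongr
      _ = t * exp (t * n) * k := by ring
  linarith [add_one_le_exp (t * exp (t * n))]

lemma half_log_mul_exp_half_log_le {y : ℝ} (hy : 0 < y) : log y / 2 * exp (log y / 2) ≤ y := by
  have hsq : exp (log y / 2) * exp (log y / 2) = y := by rw [← exp_add, add_halves, exp_log hy]
  nlinarith [add_one_le_exp (log y / 2), exp_pos (log y / 2)]

lemma one_lt_log_three_mul {n : ℝ} (hn : 1 ≤ n) : 1 < log (3 * n) := by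
  rw [lt_log_iff_exp_lt (by positivity)]
  linarith [exp_one_lt_d9]

lemma chernoff_exponent_le_neg_log {n : ℕ} {c t : ℝ} (hn : 3 ≤ n) (hc : 6 ≤ c)
    (ht : t = log (log (3 * n)) / (2 * n)) :
    -t * Mfun c n + n * (t * exp (t * n)) ≤ -log n := by
  have hn' : (3 : ℝ) ≤ n := by exact_mod_cast hn
  have hG : 1 < log (3 * n) := one_lt_log_three_mul (by linarith)
  have hL : 0 < log (log (3 * n)) := log_pos hG
  have htM : t * Mfun c n = c * log n / 2 := by
    rw [ht, Mfun]
    field_simp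
  have htn : t * n = log (log (3 * n)) / 2 := by
    rw [ht]
    field_simp
  have hsum : n * (t * exp (t * n)) ≤ log (3 * n) := by
    rw [show n * (t * exp (t * n)) = t * n * exp (t * n) by ring, htn]
    exact half_log_mul_exp_half_log_le (by linarith)
  have hlog : log (3 * n) ≤ 2 * log n := by
    rw [log_mul (by norm_num) (by positivity)]
    linarith [log_le_log (by norm_num) hn']
  have hlogn : 0 ≤ log n := log_nonneg (by linarith)
  nlinarith

section Harmonic

variable {Ω : Type*} [MeasureSpace Ω] [IsProbabilityMeasure (ℙ : Measure Ω)] {Z : ℕ → Ω → ℕ}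

lemma ae_eq_zero_or_eq_one_of_harmonic (hZmeas : ∀ k, Measurable (Z k))
    (hZ1 : ∀ k : ℕ, 1 ≤ k → ℙ {ω | Z k ω = 1} = 1 / k)
    (hZ0 : ∀ k : ℕ, 1 ≤ k → ℙ {ω | Z k ω = 0} = 1 - 1 / k) {k : ℕ} (hk : 1 ≤ k) :
    ∀ᵐ ω, Z k ω = 0 ∨ Z k ω = 1 := by
  refine ae_eq_zero_or_eq_one_of_measure_add_eq_one (hZmeas k) ?_
  rw [hZ0 k hk, hZ1 k hk, tsub_add_cancel_of_le]
  rw [one_div, ENNReal.inv_le_one]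
  exact_mod_cast hk

lemma mgf_natCast_mul_le_of_harmonic (hZmeas : ∀ k, Measurable (Z k))
    (hZ1 : ∀ k : ℕ, 1 ≤ k → ℙ {ω | Z k ω = 1} = 1 / k)
    (hZ0 : ∀ k : ℕ, 1 ≤ k → ℙ {ω | Z k ω = 0} = 1 - 1 / k) {k n : ℕ} (hk : 1 ≤ k) (hkn : k ≤ n)
    {t : ℝ} (ht : 0 ≤ t) :
    mgf (fun ω => (k : ℝ) * Z k ω) ℙ t ≤ exp (t * exp (t * n)) := by
  rw [mgf_mul_of_ae_zero_or_one (hZmeas k) (ae_eq_zero_or_eq_one_of_harmonic hZmeas hZ1 hZ0 hk),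
    measureReal_def, measureReal_def, hZ0 k hk, hZ1 k hk]
  have hk' : (0 : ℝ) < k := by exact_mod_cast hk
  have hle : (k : ENNReal)⁻¹ ≤ 1 := ENNReal.inv_le_one.2 (by exact_mod_cast hk)
  simp only [one_div, ENNReal.toReal_sub_of_le hle ENNReal.one_ne_top, ENNReal.toReal_one,
    ENNReal.toReal_inv, ENNReal.toReal_natCast]
  exact one_sub_inv_add_exp_mul_inv_le hk' (n := n) (by exact_mod_cast hkn) ht

lemma measureReal_T_ge_le_exp (hZmeas : ∀ k, Measurable (Z k)) (hZindep : iIndepFun Z ℙ)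
    (hZ1 : ∀ k : ℕ, 1 ≤ k → ℙ {ω | Z k ω = 1} = 1 / k)
    (hZ0 : ∀ k : ℕ, 1 ≤ k → ℙ {ω | Z k ω = 0} = 1 - 1 / k) (n : ℕ) {t : ℝ} (ht : 0 ≤ t)
    (ε : ℝ) :
    (ℙ : Measure Ω).real {ω | ε ≤ T Z n ω} ≤ exp (-t * ε + n * (t * exp (t * n))) := by
  set Y : ℕ → Ω → ℝ := fun k ω => (k : ℝ) * Z k ω
  have hYmeas : ∀ k, Measurable (Y k) := fun k => by fun_prop
  have hYindep : iIndepFun Y ℙ := hZindep.comp (fun k m => (k : ℝ) * m) fun k => by fun_prop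
  have hTY : ∀ ω, (T Z n ω : ℝ) = (∑ k ∈ Icc 1 n, Y k) ω := fun ω => by
    simp [T, Y, Finset.sum_apply]
  have hint : Integrable (fun ω => exp (t * (∑ k ∈ Icc 1 n, Y k) ω)) ℙ :=
    hYindep.integrable_exp_mul_sum hYmeas fun k hk => integrable_exp_mul_of_ae_zero_or_one
      (hZmeas k) (ae_eq_zero_or_eq_one_of_harmonic hZmeas hZ1 hZ0 (mem_Icc.1 hk).1) k t
  calc (ℙ : Measure Ω).real {ω | ε ≤ T Z n ω}
        = (ℙ : Measure Ω).real {ω | ε ≤ (∑ k ∈ Icc 1 n, Y k) ω} := by simp only [hTY]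
    _ ≤ exp (-t * ε) * ∏ k ∈ Icc 1 n, mgf (Y k) ℙ t := by
      rw [← hYindep.mgf_sum hYmeas]
      exact measure_ge_le_exp_mul_mgf ε ht hint
    _ ≤ exp (-t * ε) * ∏ _k ∈ Icc 1 n, exp (t * exp (t * n)) := by
      gcongr with k hk
      · exact fun _ _ => mgf_nonneg
      · exact mgf_natCast_mul_le_of_harmonic hZmeas hZ1 hZ0 (mem_Icc.1 hk).1 (mem_Icc.1 hk).2 ht
    _ = exp (-t * ε + n * (t * exp (t * n))) := by
      rw [prod_const, Nat.card_Icc, add_tsub_cancel_right, ← exp_nat_mul, exp_add]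

end Harmonic

theorem tail_probability_bound
    {Ω : Type*} [MeasureSpace Ω] [IsProbabilityMeasure (ℙ : Measure Ω)]
    (Z : ℕ → Ω → ℕ) (hZmeas : ∀ k, Measurable (Z k))
    (hZindep : iIndepFun Z ℙ)
    (hZ1 : ∀ k : ℕ, 1 ≤ k → ℙ {ω | Z k ω = 1} = 1 / k)
    (hZ0 : ∀ k : ℕ, 1 ≤ k → ℙ {ω | Z k ω = 0} = 1 - 1 / k) :
    ∃ c₀ > (0 : ℝ), ∀ c ≥ c₀, ∃ C : ℝ, ∀ n : ℕ, 3 ≤ n →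
      (∑' m : ℕ, if Mfun c n < (m : ℝ) then (ℙ {ω | T Z n ω = m}).toReal else 0) ≤
        C / n := by
  refine ⟨6, by norm_num, fun c hc => ⟨1, fun n hn => ?_⟩⟩
  set t := log (log (3 * (n : ℝ))) / (2 * n) with ht
  have ht0 : 0 ≤ t :=
    div_nonneg (log_nonneg (one_lt_log_three_mul (Nat.one_le_cast.2 (by omega))).le) (by positivity)
  have hTmeas : Measurable (T Z n) := by unfold T; fun_prop
  calc _ = (ℙ : Measure Ω).real {ω | Mfun c n < T Z n ω} :=
        tsum_measureReal_eq_measureReal_lt hTmeas _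
    _ ≤ (ℙ : Measure Ω).real {ω | Mfun c n ≤ T Z n ω} :=
        measureReal_mono (Set.ofPred_subset_ofPred.2 fun _ => le_of_lt)
    _ ≤ exp (-t * Mfun c n + n * (t * exp (t * n))) :=
      measureReal_T_ge_le_exp hZmeas hZindep hZ1 hZ0 n ht0 _
    _ ≤ exp (-log n) := exp_le_exp.2 (chernoff_exponent_le_neg_log hn hc ht)
    _ = 1 / n := by rw [exp_neg, exp_log (by positivity), one_div]
end

section
/- There exists c₀ > 0 such that for every c ≥ c₀ there is a constant C with (1/n)·Σ_{m > M(n)} ϱ(m/n) ≤ C/n for all n ≥ 3, where M(n) := c·n·(log n)/(log log 3n), the sum being over integers m. -/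
open MeasureTheory Filter Finset

/-!
Integrating the delay equation gives `u ϱ(u) = ∫_{u-1}^u ϱ` for `u ≥ 1`. Hence `ϱ` stays positive
(at a first zero `w` the integral would be positive), is nonincreasing, and by induction
`ϱ(u) ≤ 1 / ⌊u⌋!`. The integers `m > M(n)` fall into blocks of `n` consecutive values with the same
`k = ⌊m/n⌋ ≥ K := ⌊M(n)/n⌋`, so the sum is at most `n ∑_{k ≥ K} 1/k! ≤ 2n/K!`. For `c ≥ 12`,
`K ≈ c log n / log log 3n` and Stirling's `log K! ≥ K (log K - 1)` give `K! ≥ n`, so the sum is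
at most `2` for every `n ≥ 3`.
-/

open Real Set
open scoped Nat

theorem Finset.sum_range_mul_comp_div {M : Type*} [AddCommMonoid M] (h : ℕ → M) (N n : ℕ) :
    ∑ m ∈ range (N * n), h (m / n) = n • ∑ k ∈ range N, h k := by
  induction N with
  | zero => simp
  | succ N ih =>
    have hblock : ∀ r ∈ range n, h ((N * n + r) / n) = h N := fun r hr ↦ by
      rw [Nat.add_comm, Nat.add_mul_div_right _ _ (pos_of_ne_zero (by rintro rfl; simp at hr)),
        Nat.div_eq_of_lt (mem_range.mp hr), zero_add]
    rw [add_one_mul, sum_range_add, ih, sum_range_succ, smul_add, sum_congr rfl hblock, sum_const,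
      card_range]

theorem tsum_le_of_le_inv_factorial_div {g : ℕ → ℝ} {n K : ℕ} (hn : 0 < n) (hK : 0 < K)
    (hg0 : ∀ m, 0 ≤ g m) (hg : ∀ m, g m ≤ if K ≤ m / n then ((m / n) ! : ℝ)⁻¹ else 0) :
    ∑' m, g m ≤ n * ((K + 1) / (K ! * K)) := by
  set h : ℕ → ℝ := fun k ↦ if K ≤ k then (k ! : ℝ)⁻¹ else 0
  have h0 : ∀ k, 0 ≤ h k := fun k ↦ by positivity
  refine Real.tsum_le_of_sum_range_le hg0 fun N ↦ ?_
  calc ∑ m ∈ range N, g m ≤ ∑ m ∈ range (N * n), h (m / n) :=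
        (sum_le_sum fun m _ ↦ hg m).trans (sum_le_sum_of_subset_of_nonneg
          (range_mono (Nat.le_mul_of_pos_right N hn)) fun m _ _ ↦ h0 _)
    _ = n * ∑ k ∈ range N, h k := by rw [sum_range_mul_comp_div, nsmul_eq_mul]
    _ ≤ n * ((K + 1) / (K ! * K)) := by
        gcongr
        simpa [h, ← sum_filter] using Complex.sum_div_factorial_le (α := ℝ) K N hK

structure IsDickman (ϱ : ℝ → ℝ) : Prop where
  continuousOn : ContinuousOn ϱ (Ici 0)
  eq_one : ∀ u : ℝ, 0 ≤ u → u ≤ 1 → ϱ u = 1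
  hasDerivAt : ∀ u : ℝ, 1 < u → HasDerivAt ϱ (-ϱ (u - 1) / u) u

namespace IsDickman

variable {ϱ : ℝ → ℝ}

theorem intervalIntegrable (hϱ : IsDickman ϱ) {a b : ℝ} (ha : 0 ≤ a) (hb : 0 ≤ b) :
    IntervalIntegrable ϱ volume a b :=
  (hϱ.continuousOn.mono fun _ ht ↦ (le_min ha hb).trans ht.1).intervalIntegrable

theorem hasDerivAt_primitive (hϱ : IsDickman ϱ) {x : ℝ} (hx : 0 < x) :
    HasDerivAt (fun y ↦ ∫ t in (0 : ℝ)..y, ϱ t) (ϱ x) x :=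
  intervalIntegral.integral_hasDerivAt_right (hϱ.intervalIntegrable le_rfl hx.le)
    ((hϱ.continuousOn.mono Ioi_subset_Ici_self).stronglyMeasurableAtFilter isOpen_Ioi x hx)
    (hϱ.continuousOn.continuousAt (Ici_mem_nhds hx))

theorem continuousOn_primitive (hϱ : IsDickman ϱ) {u : ℝ} (hu : 0 ≤ u) :
    ContinuousOn (fun y ↦ ∫ t in (0 : ℝ)..y, ϱ t) (Icc 0 u) := by
  have := intervalIntegral.continuousOn_primitive_interval (μ := volume) (a := 0) (b := u) (f := ϱ)
  rw [Set.uIcc_of_le hu] at this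
  exact this (hϱ.continuousOn.mono fun _ ht ↦ ht.1).integrableOn_Icc

theorem integral_zero_one (hϱ : IsDickman ϱ) : ∫ t in (0 : ℝ)..1, ϱ t = 1 := by
  rw [intervalIntegral.integral_congr (g := fun _ ↦ (1 : ℝ)) fun t ht ↦ ?_]
  · simp
  · rw [Set.uIcc_of_le zero_le_one] at ht
    exact hϱ.eq_one t ht.1 ht.2

/-- `u ϱ(u) - ∫_{u-1}^u ϱ` has derivative `0` on `(1, ∞)` and vanishes at `u = 1`. -/
theorem mul_eq_integral (hϱ : IsDickman ϱ) {u : ℝ} (hu : 1 ≤ u) :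
    u * ϱ u = ∫ t in (u - 1)..u, ϱ t := by
  set F : ℝ → ℝ := fun x ↦ ∫ t in (0 : ℝ)..x, ϱ t
  set G : ℝ → ℝ := fun x ↦ x * ϱ x - F x + F (x - 1)
  have hG1 : G 1 = 0 := by
    simp [G, F, hϱ.integral_zero_one, hϱ.eq_one 1 zero_le_one le_rfl]
  have hGu : G u = G 1 := by
    rcases hu.eq_or_lt with rfl | hu
    · rfl
    have hG : ∀ x, 1 < x → HasDerivAt G 0 x := fun x hx ↦ by
      have hshift : HasDerivAt (fun y ↦ F (y - 1)) (ϱ (x - 1)) x :=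
        (hϱ.hasDerivAt_primitive (by linarith)).comp_sub_const x 1
      refine ((((hasDerivAt_id' x).mul (hϱ.hasDerivAt x hx)).sub
        (hϱ.hasDerivAt_primitive (by linarith))).add hshift).congr_deriv ?_
      field_simp
      ring
    have hFcont : ContinuousOn F (Icc 0 u) := hϱ.continuousOn_primitive (by linarith)
    have hGcont : ContinuousOn G (Icc 1 u) :=
      ((continuousOn_id.mul (hϱ.continuousOn.mono fun _ hx ↦ zero_le_one.trans hx.1)).sub
        (hFcont.mono (Set.Icc_subset_Icc_left zero_le_one))).add
        (hFcont.comp (by fun_prop) fun _ hx ↦ ⟨by linarith [hx.1], by linarith [hx.2]⟩)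
    obtain ⟨x, hx, hslope⟩ := exists_hasDerivAt_eq_slope G (fun _ ↦ 0) hu hGcont
      fun x hx ↦ hG x hx.1
    rw [eq_comm, div_eq_zero_iff, sub_eq_zero, sub_eq_zero] at hslope
    exact hslope.resolve_right hu.ne'
  have hsplit : F (u - 1) + ∫ t in (u - 1)..u, ϱ t = F u :=
    intervalIntegral.integral_add_adjacent_intervals
      (hϱ.intervalIntegrable le_rfl (by linarith))
      (hϱ.intervalIntegrable (by linarith) (by linarith))
  simp only [G, hG1] at hGu
  linarith

theorem pos (hϱ : IsDickman ϱ) {u : ℝ} (hu : 0 ≤ u) : 0 < ϱ u := by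
  by_contra! hneg
  set S : Set ℝ := Ici 1 ∩ ϱ ⁻¹' Iic 0
  have huS : u ∈ S := ⟨le_of_not_gt fun h ↦ by linarith [hϱ.eq_one u hu h.le], hneg⟩
  have hbdd : BddBelow S := ⟨1, fun _ hx ↦ hx.1⟩
  have hclosed : IsClosed S :=
    (hϱ.continuousOn.mono (Ici_subset_Ici.mpr zero_le_one)).preimage_isClosed_of_isClosed
      isClosed_Ici isClosed_Iic
  set w := sInf S
  obtain ⟨hw1, hw⟩ : 1 ≤ w ∧ ϱ w ≤ 0 := hclosed.csInf_mem ⟨u, huS⟩ hbdd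
  have hw1' : 1 < w := hw1.lt_of_ne fun h ↦ by
    rw [← h, hϱ.eq_one 1 zero_le_one le_rfl] at hw
    linarith
  have hposIoo : ∀ t ∈ Ioo (w - 1) w, 0 < ϱ t := fun t ht ↦ by
    rcases le_or_gt t 1 with h1 | h1
    · rw [hϱ.eq_one t (by linarith [ht.1]) h1]
      exact one_pos
    · by_contra! hc
      linarith [ht.2, csInf_le hbdd ⟨h1.le, hc⟩]
  have hint : 0 < ∫ t in (w - 1)..w, ϱ t :=
    intervalIntegral.intervalIntegral_pos_of_pos_on
      (hϱ.intervalIntegrable (by linarith) (by linarith)) hposIoo (by linarith)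
  rw [← hϱ.mul_eq_integral hw1] at hint
  nlinarith

theorem antitoneOn (hϱ : IsDickman ϱ) : AntitoneOn ϱ (Ici 1) := by
  refine antitoneOn_of_deriv_nonpos (convex_Ici 1)
    (hϱ.continuousOn.mono (Ici_subset_Ici.mpr zero_le_one)) (fun x hx ↦ ?_) fun x hx ↦ ?_
  all_goals rw [interior_Ici, Set.mem_Ioi] at hx
  · exact (hϱ.hasDerivAt x hx).differentiableAt.differentiableWithinAt
  · rw [(hϱ.hasDerivAt x hx).deriv, neg_div, neg_nonpos]
    exact div_nonneg (hϱ.pos (by linarith)).le (by linarith)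

theorem le_one (hϱ : IsDickman ϱ) {u : ℝ} (hu : 0 ≤ u) : ϱ u ≤ 1 := by
  rcases le_total u 1 with h | h
  · exact (hϱ.eq_one u hu h).le
  · exact (hϱ.antitoneOn (Set.mem_Ici.mpr le_rfl) h h).trans (hϱ.eq_one 1 zero_le_one le_rfl).le

theorem le_inv_factorial (hϱ : IsDickman ϱ) (k : ℕ) {u : ℝ} (hu : k ≤ u) : ϱ u ≤ (k ! : ℝ)⁻¹ := by
  induction k generalizing u with
  | zero => simpa using hϱ.le_one (by simpa using hu)
  | succ k ih =>
    push_cast at hu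
    have hint : u * ϱ u ≤ (k ! : ℝ)⁻¹ := by
      rw [hϱ.mul_eq_integral (by linarith)]
      calc ∫ t in (u - 1)..u, ϱ t ≤ ∫ _ in (u - 1)..u, (k ! : ℝ)⁻¹ :=
            intervalIntegral.integral_mono_on (by linarith)
              (hϱ.intervalIntegrable (by linarith) (by linarith)) intervalIntegrable_const
              fun t ht ↦ ih (by linarith [ht.1])
        _ = (k ! : ℝ)⁻¹ := by simp
    rw [Nat.factorial_succ, Nat.cast_mul, mul_inv, ← div_eq_inv_mul, le_div_iff₀ (by positivity)]
    push_cast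
    nlinarith [hϱ.pos (u := u) (by linarith)]

theorem tsum_tail_le (hϱ : IsDickman ϱ) {n : ℕ} (hn : 0 < n) {M : ℝ}
    (hK : 0 < ⌊M / n⌋₊) :
    ∑' m : ℕ, (if M < m then ϱ (m / n) else 0) ≤
      n * ((⌊M / n⌋₊ + 1) / ((⌊M / n⌋₊)! * ⌊M / n⌋₊)) := by
  have hfloor : ∀ m : ℕ, M < m → ⌊M / n⌋₊ ≤ m / n := fun m hm ↦ by
    rw [← Nat.floor_div_eq_div (K := ℝ)]
    exact Nat.floor_le_floor (div_le_div_of_nonneg_right hm.le n.cast_nonneg)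
  refine tsum_le_of_le_inv_factorial_div hn hK (fun m ↦ ?_) fun m ↦ ?_
  · split_ifs
    exacts [(hϱ.pos (by positivity)).le, le_rfl]
  · by_cases hm : M < m
    · rw [if_pos hm, if_pos (hfloor m hm)]
      exact hϱ.le_inv_factorial _ Nat.cast_div_le
    · rw [if_neg hm]
      split_ifs <;> positivity

end IsDickman

theorem Mfun_div_natCast (c : ℝ) {n : ℕ} (hn : n ≠ 0) :
    Mfun c n / n = c * (log (3 * n) - log 3) / log (log (3 * n)) := by
  rw [Mfun, log_mul (by norm_num) (by exact_mod_cast hn), add_sub_cancel_left]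
  field_simp

theorem one_lt_log_three : 1 < log 3 := by
  rw [lt_log_iff_exp_lt (by norm_num)]
  linarith [exp_one_lt_d9]

theorem exp_one_mul_sqrt_le_and_two_mul_le_mul_log {c y : ℝ} (hc : 12 ≤ c)
    (hy : 2 * log 3 ≤ y) {K : ℕ} (hK : c * (y - log 3) / log y < K + 1) :
    exp 1 * √y ≤ K ∧ 2 * (y - log 3) ≤ K * log y := by
  have hlog3 := one_lt_log_three
  set s := √y
  have hys : y = s ^ 2 := (sq_sqrt (by linarith)).symm
  have hs : 1 < s := by nlinarith [sqrt_nonneg y]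
  -- `log y = 2 log s ≤ 2 (s - 1)`
  have hlogy : log y ≤ 2 * s - 2 := by
    rw [hys, log_pow]
    push_cast
    linarith [log_le_sub_one_of_pos (by linarith : 0 < s)]
  have hlogy0 : 0 < log y := log_pos (by nlinarith)
  rw [div_lt_iff₀ hlogy0] at hK
  have hcL : 6 * y ≤ c * (y - log 3) := by nlinarith
  -- if `K < e s < 3 s` then `(K + 1) log y ≤ (3s + 1)(2s - 2) < 6 s² ≤ c (y - log 3)`
  refine ⟨le_of_not_gt fun hKs ↦ ?_, ?_⟩
  · have hK3 : (K : ℝ) + 1 ≤ 3 * s + 1 := by nlinarith [exp_one_lt_d9, K.cast_nonneg (α := ℝ)]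
    nlinarith [mul_le_mul hK3 hlogy hlogy0.le (by positivity)]
  · nlinarith

theorem one_le_floor_Mfun_div_and_le_factorial {c : ℝ} (hc : 12 ≤ c) {n : ℕ} (hn : 3 ≤ n) :
    1 ≤ ⌊Mfun c n / n⌋₊ ∧ (n : ℝ) ≤ (⌊Mfun c n / n⌋₊)! := by
  have hn3 : (3 : ℝ) ≤ n := by exact_mod_cast hn
  have hlogn : log n = log (3 * n) - log 3 := by
    rw [log_mul (by norm_num) (by positivity), add_sub_cancel_left]
  rw [Mfun_div_natCast c (by omega)]
  set y := log (3 * (n : ℝ))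
  have hy : 2 * log 3 ≤ y := by linarith [log_le_log (by norm_num) hn3]
  have hK := Nat.lt_floor_add_one (c * (y - log 3) / log y)
  set K := ⌊c * (y - log 3) / log y⌋₊
  obtain ⟨hKs, hKlog⟩ := exp_one_mul_sqrt_le_and_two_mul_le_mul_log hc hy hK
  have hy1 : 1 < y := by linarith [one_lt_log_three]
  have hK1 : (1 : ℝ) ≤ K :=
    (one_le_mul_of_one_le_of_one_le (one_le_exp zero_le_one) (one_le_sqrt.mpr hy1.le)).trans hKs
  have hK0 : 0 < K := Nat.one_le_cast.mp hK1
  refine ⟨hK0, (log_le_log_iff (by positivity) (by positivity)).mp ?_⟩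
  calc log n ≤ K * (log (exp 1 * √y) - 1) := by
        rw [log_mul (exp_ne_zero 1) (by positivity), log_exp, log_sqrt (by positivity)]
        linarith
    _ ≤ K * (log K - 1) := by gcongr
    _ ≤ log K ! := by
        nlinarith [Stirling.le_log_factorial_stirling hK0.ne', log_nonneg hK1,
          log_nonneg (by linarith [pi_gt_three] : (1 : ℝ) ≤ 2 * π)]

theorem tail_dickman_sum_bound
    (ϱ : ℝ → ℝ) (hϱcont : ContinuousOn ϱ (Set.Ici 0))
    (hϱinit : ∀ u : ℝ, 0 ≤ u → u ≤ 1 → ϱ u = 1)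
    (hϱeq : ∀ u : ℝ, 1 < u → HasDerivAt ϱ (-ϱ (u - 1) / u) u) :
    ∃ c₀ > (0 : ℝ), ∀ c ≥ c₀, ∃ C : ℝ, ∀ n : ℕ, 3 ≤ n →
      (1 / n : ℝ) * (∑' m : ℕ, if Mfun c n < (m : ℝ) then ϱ (m / n) else 0) ≤
        C / n := by
  refine ⟨12, by norm_num, fun c hc ↦ ⟨2, fun n hn ↦ ?_⟩⟩
  obtain ⟨hK, hnK⟩ := one_le_floor_Mfun_div_and_le_factorial hc hn
  set K := ⌊Mfun c n / n⌋₊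
  have hsum := IsDickman.tsum_tail_le ⟨hϱcont, hϱinit, hϱeq⟩ (by omega) hK
  have hK1 : (1 : ℝ) ≤ K := by exact_mod_cast hK
  have hbound : (n : ℝ) * ((K + 1) / (K ! * K)) ≤ 2 := by
    rw [mul_div_assoc', div_le_iff₀ (by positivity)]
    nlinarith
  rw [one_div_mul_eq_div]
  gcongr
  linarith
end

section
/- There exist a constant C and n₀ ≥ 16 such that for all n ≥ n₀, taking y := (log log n)/n, one has Π_{1≤k≤n} (1 + (e^{ky} − 1)/k) ≤ C·n^{2/log log n}. -/
open Filter Finset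

set_option maxHeartbeats 1000000 in
theorem product_bound_exp :
    ∃ C : ℝ, ∃ n₀ : ℕ, 16 ≤ n₀ ∧ ∀ n : ℕ, n₀ ≤ n →
      (∏ k ∈ Finset.Icc 1 n,
          (1 + (Real.exp (k * (Real.log (Real.log n) / n)) - 1) / k)) ≤
        C * (n : ℝ) ^ (2 / Real.log (Real.log n)) := by
  -- eventual smallness conditions
  have hx1 : ∀ᶠ x : ℝ in atTop, (Real.log x) ^ 2 ≤ 3/10 * x ^ ((1:ℝ)/3) := by
    have hlb := Asymptotics.isLittleO_iff.mp
      (isLittleO_log_rpow_atTop (show (0:ℝ) < 1/6 by norm_num))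
      (show (0:ℝ) < 1/2 by norm_num)
    filter_upwards [hlb, eventually_ge_atTop (1:ℝ)] with x h1 h2
    have hx0 : (0:ℝ) ≤ x := by linarith
    have hlog0 : 0 ≤ Real.log x := Real.log_nonneg h2
    rw [Real.norm_eq_abs, Real.norm_eq_abs, abs_of_nonneg hlog0,
      abs_of_nonneg (Real.rpow_nonneg hx0 _)] at h1
    have hsq : (x ^ ((1:ℝ)/6)) ^ 2 = x ^ ((1:ℝ)/3) := by
      rw [← Real.rpow_natCast (x ^ ((1:ℝ)/6)) 2, ← Real.rpow_mul hx0]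
      norm_num
    nlinarith [Real.rpow_nonneg hx0 ((1:ℝ)/6), Real.rpow_nonneg hx0 ((1:ℝ)/3)]
  have hx2 : ∀ᶠ x : ℝ in atTop, Real.log x ≤ x / 10 := by
    have hlb := Asymptotics.isLittleO_iff.mp Real.isLittleO_log_id_atTop
      (show (0:ℝ) < 1/10 by norm_num)
    filter_upwards [hlb, eventually_ge_atTop (0:ℝ)] with x h1 h2
    calc Real.log x ≤ |Real.log x| := le_abs_self _
      _ = ‖Real.log x‖ := (Real.norm_eq_abs _).symm
      _ ≤ 1/10 * ‖id x‖ := h1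
      _ = x / 10 := by rw [id_eq, Real.norm_eq_abs, abs_of_nonneg h2]; ring
  have hcast : Tendsto (fun n : ℕ => (n:ℝ)) atTop atTop := tendsto_natCast_atTop_atTop
  have hloglog : Tendsto (fun n : ℕ => Real.log (n:ℝ)) atTop atTop :=
    Real.tendsto_log_atTop.comp hcast
  obtain ⟨M, hM⟩ := eventually_atTop.mp ((hloglog.eventually hx1).and (hcast.eventually hx2))
  refine ⟨1, max 16 M, le_max_left _ _, ?_⟩
  intro n hn
  obtain ⟨hE1, hE2⟩ := hM n (le_trans (le_max_right _ _) hn)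
  have h16 : (16:ℕ) ≤ n := le_trans (le_max_left _ _) hn
  -- notation
  set N : ℝ := (n:ℝ) with hNdef
  set ln : ℝ := Real.log N with hlndef
  set L : ℝ := Real.log ln with hLdef
  set y : ℝ := L / N with hydef
  -- basic facts
  have hN16 : (16:ℝ) ≤ N := by rw [hNdef]; exact_mod_cast h16
  have hN0 : (0:ℝ) < N := by linarith
  have hln1 : 1 < ln := by
    rw [hlndef, ← Real.log_exp 1]
    apply Real.log_lt_log (Real.exp_pos 1)
    calc Real.exp 1 < 2.7182818286 := Real.exp_one_lt_d9
      _ ≤ N := by linarith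
  have hln0 : (0:ℝ) < ln := by linarith
  have hL : 0 < L := Real.log_pos hln1
  have hy0 : 0 < y := div_pos hL hN0
  have hLln : L ≤ ln := by
    rw [hLdef]; exact Real.log_le_self hln0.le
  have hy110 : y ≤ 1/10 := by
    rw [hydef, div_le_iff₀ hN0]
    have : ln ≤ N / 10 := hE2
    linarith
  have hexpy : Real.exp y ≤ 6/5 := by
    have h10 : Real.exp (1/10 : ℝ) ≤ 6/5 := by
      rw [← pow_le_pow_iff_left₀ (Real.exp_pos _).le (by norm_num : (0:ℝ) ≤ 6/5)
        (show 10 ≠ 0 by norm_num)]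
      rw [← Real.exp_nat_mul]
      calc Real.exp ((10:ℕ) * (1/10 : ℝ)) = Real.exp 1 := by norm_num
        _ ≤ 2.7182818286 := Real.exp_one_lt_d9.le
        _ ≤ (6/5:ℝ)^10 := by norm_num
    exact (Real.exp_le_exp.mpr hy110).trans h10
  have hny : N * y = L := by
    rw [hydef]; field_simp
  -- Step 1: product ≤ exp of sum
  have step1 : (∏ k ∈ Finset.Icc 1 n, (1 + (Real.exp (k * y) - 1) / k)) ≤
      Real.exp (∑ k ∈ Finset.Icc 1 n, (Real.exp (k * y) - 1) / k) := by
    rw [Real.exp_sum]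
    apply Finset.prod_le_prod
    · intro k hk
      have hk1 : 1 ≤ k := (Finset.mem_Icc.mp hk).1
      have hk0 : (0:ℝ) < k := by exact_mod_cast Nat.lt_of_lt_of_le Nat.zero_lt_one hk1
      have h1e : (1:ℝ) ≤ Real.exp (k * y) := Real.one_le_exp (by positivity)
      have hd : 0 ≤ (Real.exp (k * y) - 1) / k := div_nonneg (by linarith) hk0.le
      linarith
    · intro k hk
      have := Real.add_one_le_exp ((Real.exp (k * y) - 1) / k)
      linarith
  -- the split point
  set m : ℕ := 2 * n / 3 with hmdef
  have hmn : m ≤ n := by omega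
  have hm3 : 3 * m ≤ 2 * n := by omega
  have hm3' : 2 * n < 3 * (m + 1) := by omega
  have hm3n : m * 3 ≤ 2 * n := by omega
  have hm1n : 2 * n ≤ 3 * (m + 1) := by omega
  have hmR : (m:ℝ) * 3 ≤ 2 * N := by rw [hNdef]; exact_mod_cast hm3n
  have hmR' : 2 * N ≤ 3 * ((m:ℝ) + 1) := by
    rw [hNdef]
    have := hm1n
    push_cast
    exact_mod_cast Nat.cast_le.mpr this
  have hmy : (m:ℝ) * y ≤ 2/3 * L := by
    have hmN : (m:ℝ) ≤ 2 * N / 3 := by linarith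
    calc (m:ℝ) * y ≤ (2 * N / 3) * y := mul_le_mul_of_nonneg_right hmN hy0.le
      _ = 2/3 * L := by rw [hydef]; field_simp
  -- split the sum
  have hsplit : ∑ k ∈ Finset.Icc 1 n, (Real.exp (k * y) - 1) / k =
      (∑ k ∈ Finset.Icc 1 m, (Real.exp (k * y) - 1) / k) +
      ∑ k ∈ Finset.Icc (m + 1) n, (Real.exp (k * y) - 1) / k := by
    rw [← Finset.Ico_add_one_right_eq_Icc, ← Finset.Ico_add_one_right_eq_Icc, ← Finset.Ico_add_one_right_eq_Icc]
    rw [Finset.sum_Ico_consecutive _ (by omega : 1 ≤ m + 1) (by omega : m + 1 ≤ n + 1)]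
  -- pointwise bound: exp x - 1 ≤ x * exp x
  have hkey : ∀ x : ℝ, 0 ≤ x → Real.exp x - 1 ≤ x * Real.exp x := by
    intro x hx
    have h := Real.add_one_le_exp (-x)
    rw [Real.exp_neg] at h
    have hp := Real.exp_pos x
    have hinv : Real.exp x * (Real.exp x)⁻¹ = 1 := mul_inv_cancel₀ (ne_of_gt hp)
    nlinarith
  -- Part A
  have hA : (∑ k ∈ Finset.Icc 1 m, (Real.exp (k * y) - 1) / k) ≤
      2/3 * L * Real.exp (2/3 * L) := by
    have hptA : ∀ k ∈ Finset.Icc 1 m, (Real.exp (k * y) - 1) / k ≤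
        y * Real.exp (2/3 * L) := by
      intro k hk
      obtain ⟨hk1, hkm⟩ := Finset.mem_Icc.mp hk
      have hk0 : (0:ℝ) < k := by exact_mod_cast Nat.lt_of_lt_of_le Nat.zero_lt_one hk1
      have hky : (k:ℝ) * y ≤ 2/3 * L := by
        calc (k:ℝ) * y ≤ (m:ℝ) * y := by
              have : (k:ℝ) ≤ (m:ℝ) := by exact_mod_cast hkm
              exact mul_le_mul_of_nonneg_right this hy0.le
          _ ≤ 2/3 * L := hmy
      have h1 := hkey ((k:ℝ) * y) (by positivity)
      rw [div_le_iff₀ hk0]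
      calc Real.exp (k * y) - 1 ≤ (k * y) * Real.exp (k * y) := h1
        _ ≤ (k * y) * Real.exp (2/3 * L) := by
            have := Real.exp_le_exp.mpr hky
            have hky0 : (0:ℝ) ≤ (k:ℝ) * y := by positivity
            exact mul_le_mul_of_nonneg_left this hky0
        _ = y * Real.exp (2/3 * L) * k := by ring
    calc (∑ k ∈ Finset.Icc 1 m, (Real.exp (k * y) - 1) / k) ≤
        (Finset.Icc 1 m).card • (y * Real.exp (2/3 * L)) :=
          Finset.sum_le_card_nsmul _ _ _ hptA
      _ = (m:ℝ) * (y * Real.exp (2/3 * L)) := by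
          rw [Nat.card_Icc]; simp [nsmul_eq_mul]
      _ = ((m:ℝ) * y) * Real.exp (2/3 * L) := by ring
      _ ≤ 2/3 * L * Real.exp (2/3 * L) := by
          exact mul_le_mul_of_nonneg_right hmy (Real.exp_pos _).le
  -- Part B
  have hgeom : (∑ k ∈ Finset.Icc 1 n, Real.exp (k * y)) ≤ 6/5 * ln / y := by
    have hr1 : (1:ℝ) < Real.exp y := by
      have := Real.add_one_le_exp y; linarith
    have hrw : ∀ k : ℕ, Real.exp ((k:ℝ) * y) = (Real.exp y) ^ k := fun k =>
      Real.exp_nat_mul y k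
    have hsum : (∑ k ∈ Finset.Icc 1 n, Real.exp ((k:ℝ) * y)) =
        ((Real.exp y) ^ (n + 1) - (Real.exp y) ^ 1) / (Real.exp y - 1) := by
      rw [← Finset.Ico_add_one_right_eq_Icc]
      rw [Finset.sum_congr rfl (fun k _ => hrw k)]
      exact geom_sum_Ico (ne_of_gt hr1) (by omega)
    rw [hsum]
    have hr0 : 0 < Real.exp y - 1 := by linarith
    have hexpn1 : (Real.exp y) ^ (n + 1) ≤ 6/5 * ln := by
      rw [← Real.exp_nat_mul]
      have : ((n:ℝ) + 1) * y = L + y := by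
        push_cast; rw [add_mul, one_mul, hny]
      rw [Nat.cast_add, Nat.cast_one, this, Real.exp_add]
      rw [hLdef, Real.exp_log hln0]
      calc ln * Real.exp y ≤ ln * (6/5) := mul_le_mul_of_nonneg_left hexpy hln0.le
        _ = 6/5 * ln := by ring
    have hyr : y ≤ Real.exp y - 1 := by
      have := Real.add_one_le_exp y; linarith
    calc ((Real.exp y) ^ (n + 1) - (Real.exp y) ^ 1) / (Real.exp y - 1) ≤
        (Real.exp y) ^ (n + 1) / (Real.exp y - 1) := by
          gcongr
          nlinarith [pow_pos (Real.exp_pos y) 1]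
      _ ≤ (Real.exp y) ^ (n + 1) / y := by
          gcongr
      _ ≤ 6/5 * ln / y := by gcongr
  have hB : (∑ k ∈ Finset.Icc (m + 1) n, (Real.exp (k * y) - 1) / k) ≤
      9/5 * ln / L := by
    have hm1R : (0:ℝ) < (m:ℝ) + 1 := by positivity
    have hptB : ∀ k ∈ Finset.Icc (m + 1) n, (Real.exp (k * y) - 1) / k ≤
        Real.exp (k * y) / ((m:ℝ) + 1) := by
      intro k hk
      obtain ⟨hk1, hkn⟩ := Finset.mem_Icc.mp hk
      have hk0 : (0:ℝ) < k := by
        have : (0:ℕ) < k := by omega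
        exact_mod_cast this
      have hkm : ((m:ℝ) + 1) ≤ (k:ℝ) := by exact_mod_cast hk1
      have hnum : Real.exp (k * y) - 1 ≤ Real.exp (k * y) := by linarith
      calc (Real.exp (k * y) - 1) / k ≤ Real.exp (k * y) / k := by
            gcongr
        _ ≤ Real.exp (k * y) / ((m:ℝ) + 1) := by
            apply div_le_div_of_nonneg_left (Real.exp_pos _).le hm1R hkm
    calc (∑ k ∈ Finset.Icc (m + 1) n, (Real.exp (k * y) - 1) / k) ≤
        ∑ k ∈ Finset.Icc (m + 1) n, Real.exp (k * y) / ((m:ℝ) + 1) :=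
          Finset.sum_le_sum hptB
      _ = (∑ k ∈ Finset.Icc (m + 1) n, Real.exp (k * y)) / ((m:ℝ) + 1) := by
          rw [Finset.sum_div]
      _ ≤ (∑ k ∈ Finset.Icc 1 n, Real.exp (k * y)) / ((m:ℝ) + 1) := by
          apply div_le_div_of_nonneg_right ?_ hm1R.le
          apply Finset.sum_le_sum_of_subset_of_nonneg
          · exact Finset.Icc_subset_Icc_left (by omega)
          · intro i _ _; exact (Real.exp_pos _).le
      _ ≤ (6/5 * ln / y) / ((m:ℝ) + 1) := by
          exact div_le_div_of_nonneg_right hgeom hm1R.le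
      _ ≤ (6/5 * ln / y) / (2 * N / 3) := by
          exact div_le_div_of_nonneg_left (by positivity) (by positivity) (by linarith)
      _ = 9/5 * ln / L := by
          rw [hydef]
          field_simp
          ring
  -- combine
  have hrpow23 : Real.exp (2/3 * L) = ln ^ ((2:ℝ)/3) := by
    rw [Real.rpow_def_of_pos hln0, ← hLdef]
    ring_nf
  have hfin : 2/3 * L * ln ^ ((2:ℝ)/3) + 9/5 * ln / L ≤ 2 * ln / L := by
    have hpow : ln ^ ((1:ℝ)/3) * ln ^ ((2:ℝ)/3) = ln := by
      rw [← Real.rpow_add hln0]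
      norm_num
    have h1 : L ^ 2 * ln ^ ((2:ℝ)/3) ≤ 3/10 * ln := by
      calc L ^ 2 * ln ^ ((2:ℝ)/3) ≤ (3/10 * ln ^ ((1:ℝ)/3)) * ln ^ ((2:ℝ)/3) := by
            gcongr
        _ = 3/10 * ln := by rw [mul_assoc, hpow]
    have h2 : 2/3 * L * ln ^ ((2:ℝ)/3) ≤ 1/5 * (ln / L) := by
      rw [show (1:ℝ)/5 * (ln / L) = (1/5 * ln)/L by ring, le_div_iff₀ hL]
      nlinarith
    have h3 : 9/5 * ln / L = 9/5 * (ln / L) := by ring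
    have h4 : 2 * ln / L = 2 * (ln / L) := by ring
    rw [h3, h4]
    linarith
  have hsum2 : (∑ k ∈ Finset.Icc 1 n, (Real.exp (k * y) - 1) / k) ≤ 2 * ln / L := by
    rw [hsplit]
    calc (∑ k ∈ Finset.Icc 1 m, (Real.exp (k * y) - 1) / k) +
        (∑ k ∈ Finset.Icc (m + 1) n, (Real.exp (k * y) - 1) / k) ≤
        2/3 * L * Real.exp (2/3 * L) + 9/5 * ln / L := add_le_add hA hB
      _ = 2/3 * L * ln ^ ((2:ℝ)/3) + 9/5 * ln / L := by rw [hrpow23]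
      _ ≤ 2 * ln / L := hfin
  have hrhs : N ^ (2 / L) = Real.exp (2 * ln / L) := by
    rw [Real.rpow_def_of_pos hN0, ← hlndef]
    ring_nf
  calc (∏ k ∈ Finset.Icc 1 n, (1 + (Real.exp (k * y) - 1) / k)) ≤
      Real.exp (∑ k ∈ Finset.Icc 1 n, (Real.exp (k * y) - 1) / k) := step1
    _ ≤ Real.exp (2 * ln / L) := Real.exp_le_exp.mpr hsum2
    _ = N ^ (2 / L) := hrhs.symm
    _ = 1 * N ^ (2 / L) := (one_mul _).symm
end

section
/- For n ≥ 1 and real τ with |τ| ≤ π, put W_n(τ) := Σ_{k>n} (e^{ikτ} − 1)²/(2k²). Then uniformly in n and τ, W_n(τ) = (1/(2n))·(1 + O(1/(1 + n·min(|τ|, π − |τ|)))); that is, there is an absolute constant C with |2n·W_n(τ) − 1| ≤ C/(1 + n·min(|τ|, π − |τ|)) for all n ≥ 1 and |τ| ≤ π. -/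
/-!
With `u = e^{iτ}` and `T_n(v) = ∑_{j ≥ 0} vʲ / (n + 1 + j)²` (so that `∑_{k > n} vᵏ / k² = v^{n+1} T_n(v)`),
expanding the square gives `2 W_n(τ) = u^{2n+2} T_n(u²) − 2 u^{n+1} T_n(u) + T_n(1)`.
Squeezing `1 / (n + 1 + j)²` between consecutive differences of `1 / (x + j)` gives
`1 / (n + 1) ≤ T_n(1) ≤ 1 / n`, which handles the last term and shows `n ‖T_n(v)‖ ≤ 1` on the unit disc.
Abel summation gives `‖(1 − v) T_n(v)‖ ≤ 2 / (n + 1)²`, and by Jordan's inequality both `‖1 − u‖` and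
`‖1 − u²‖` are at least `(2 / π) min(|τ|, π − |τ|)`; together the two bounds on `T_n(u)` and `T_n(u²)`
give `O(1 / (1 + n min(|τ|, π − |τ|)))`.
-/

open Filter Finset Complex

/-- `W n τ = ∑_{k > n} (e^{ikτ} − 1)² / (2k²)`. -/
noncomputable def W (n : ℕ) (τ : ℝ) : ℂ :=
  ∑' k : ℕ, if n < k then (Complex.exp (Complex.I * k * τ) - 1) ^ 2 / (2 * k ^ 2) else 0

open scoped Topology Real

lemma hasSum_sub_succ_of_antitone {a : ℕ → ℝ} (ha : Antitone a) (h0 : Tendsto a atTop (𝓝 0)) :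
    HasSum (fun j => a j - a (j + 1)) (a 0) := by
  rw [hasSum_iff_tendsto_nat_of_nonneg fun j => sub_nonneg.2 (ha j.le_succ)]
  simp_rw [Finset.sum_range_sub']
  simpa using tendsto_const_nhds.sub h0

section PowerSeries

variable {a : ℕ → ℝ} {u : ℂ}

lemma norm_pow_mul_le (hu : ‖u‖ ≤ 1) (j : ℕ) {x : ℝ} (hx : 0 ≤ x) : ‖u ^ j * x‖ ≤ x := by
  rw [norm_mul, norm_pow, Complex.norm_real, Real.norm_of_nonneg hx]
  exact mul_le_of_le_one_left hx (pow_le_one₀ (norm_nonneg u) hu)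

lemma summable_pow_mul (ha : Summable a) (ha0 : 0 ≤ a) (hu : ‖u‖ ≤ 1) :
    Summable fun j => u ^ j * a j :=
  ha.of_norm_bounded fun j => norm_pow_mul_le hu j (ha0 j)

lemma norm_tsum_pow_mul_le (ha : Summable a) (ha0 : 0 ≤ a) (hu : ‖u‖ ≤ 1) :
    ‖∑' j, u ^ j * a j‖ ≤ ∑' j, a j :=
  (summable_pow_mul ha ha0 hu).hasSum.norm_le_of_bounded ha.hasSum fun j => norm_pow_mul_le hu j (ha0 j)

/-- Abel summation: `(1 - u) ∑ uʲ aⱼ = a₀ - ∑ uʲ⁺¹ (aⱼ - aⱼ₊₁)`, and the last sum telescopes. -/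
lemma norm_one_sub_mul_tsum_pow_mul_le (ha : Antitone a) (has : Summable a) (hu : ‖u‖ ≤ 1) :
    ‖(1 - u) * ∑' j, u ^ j * a j‖ ≤ 2 * a 0 := by
  have h0 : Tendsto a atTop (𝓝 0) := has.tendsto_atTop_zero
  have ha0 : 0 ≤ a := fun j => ha.le_of_tendsto h0 j
  set s := ∑' j, u ^ j * a j
  have hs := (summable_pow_mul has ha0 hu).hasSum
  have hshift : HasSum (fun j => u ^ (j + 1) * a (j + 1)) (s - a 0) := by
    simpa using (hasSum_nat_add_iff' 1).mpr hs
  have hdiff : HasSum (fun j => u ^ (j + 1) * ↑(a j - a (j + 1))) (u * s - (s - a 0)) := by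
    refine ((hs.mul_left u).sub hshift).congr_fun fun j => ?_
    push_cast
    ring
  have hbound : ‖u * s - (s - a 0)‖ ≤ a 0 :=
    hdiff.norm_le_of_bounded (hasSum_sub_succ_of_antitone ha h0)
      fun j => norm_pow_mul_le hu (j + 1) (sub_nonneg.2 (ha j.le_succ))
  calc ‖(1 - u) * s‖ = ‖(a 0 : ℂ) - (u * s - (s - a 0))‖ := by congr 1; ring
    _ ≤ a 0 + a 0 := by
      refine (norm_sub_le _ _).trans (add_le_add ?_ hbound)
      rw [Complex.norm_real, Real.norm_of_nonneg (ha0 0)]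
    _ = 2 * a 0 := by ring

end PowerSeries

noncomputable def tailCoeff (n j : ℕ) : ℝ := 1 / ((n : ℝ) + 1 + j) ^ 2

noncomputable def tailSeries (n : ℕ) (v : ℂ) : ℂ := ∑' j, v ^ j * tailCoeff n j

lemma hasSum_one_div_add_sub_one_div_add_succ {x : ℝ} (hx : 0 < x) :
    HasSum (fun j : ℕ => 1 / (x + j) - 1 / (x + (j + 1 : ℕ))) (1 / x) := by
  have hanti : Antitone fun j : ℕ => 1 / (x + j) := fun i j hij => by
    dsimp only
    gcongr
  have h0 : Tendsto (fun j : ℕ => 1 / (x + j)) atTop (𝓝 0) := by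
    simpa only [one_div, Pi.inv_def] using
      (tendsto_atTop_add_const_left _ x tendsto_natCast_atTop_atTop).inv_tendsto_atTop
  simpa using hasSum_sub_succ_of_antitone hanti h0

lemma tailCoeff_antitone (n : ℕ) : Antitone (tailCoeff n) := fun i j hij => by
  unfold tailCoeff
  gcongr

lemma summable_tailCoeff (n : ℕ) : Summable (tailCoeff n) := by
  have h := (summable_nat_add_iff (n + 1)).mpr
    ((Real.summable_one_div_nat_pow (p := 2)).mpr one_lt_two)
  refine h.congr fun j => ?_
  simp only [tailCoeff]
  push_cast
  ring_nf

lemma tsum_tailCoeff_le {n : ℕ} (hn : 1 ≤ n) : ∑' j, tailCoeff n j ≤ 1 / n := by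
  have hx : (0 : ℝ) < n := by exact_mod_cast hn
  refine hasSum_le (fun j => ?_) (summable_tailCoeff n).hasSum
    (hasSum_one_div_add_sub_one_div_add_succ hx)
  have hj : (0 : ℝ) ≤ j := j.cast_nonneg
  rw [tailCoeff, div_sub_div _ _ (by positivity) (by positivity), div_le_div_iff₀ (by positivity)
    (by positivity)]
  push_cast
  nlinarith

lemma one_div_succ_le_tsum_tailCoeff (n : ℕ) : 1 / ((n : ℝ) + 1) ≤ ∑' j, tailCoeff n j := by
  refine hasSum_le (fun j => ?_) (hasSum_one_div_add_sub_one_div_add_succ (by positivity))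
    (summable_tailCoeff n).hasSum
  have hj : (0 : ℝ) ≤ j := j.cast_nonneg
  rw [tailCoeff, div_sub_div _ _ (by positivity) (by positivity), div_le_div_iff₀ (by positivity)
    (by positivity)]
  push_cast
  nlinarith

section TailSeries

variable {n : ℕ} {v : ℂ}

lemma hasSum_tailSeries (n : ℕ) (hv : ‖v‖ ≤ 1) :
    HasSum (fun j => v ^ j * tailCoeff n j) (tailSeries n v) :=
  (summable_pow_mul (summable_tailCoeff n) (fun j => by unfold tailCoeff; positivity) hv).hasSum

lemma natCast_mul_norm_tailSeries_le_one (hn : 1 ≤ n) (hv : ‖v‖ ≤ 1) :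
    n * ‖tailSeries n v‖ ≤ 1 := by
  have hx : (0 : ℝ) < n := by exact_mod_cast hn
  calc n * ‖tailSeries n v‖ ≤ n * (1 / n) := by
        gcongr
        exact (norm_tsum_pow_mul_le (summable_tailCoeff n)
          (fun j => by unfold tailCoeff; positivity) hv).trans (tsum_tailCoeff_le hn)
    _ = 1 := by field_simp

lemma norm_one_sub_mul_norm_tailSeries_le (n : ℕ) (hv : ‖v‖ ≤ 1) :
    ‖1 - v‖ * ‖tailSeries n v‖ ≤ 2 / ((n : ℝ) + 1) ^ 2 := by
  rw [← norm_mul]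
  calc ‖(1 - v) * tailSeries n v‖ ≤ 2 * tailCoeff n 0 :=
        norm_one_sub_mul_tsum_pow_mul_le (tailCoeff_antitone n) (summable_tailCoeff n) hv
    _ = 2 / ((n : ℝ) + 1) ^ 2 := by simp [tailCoeff, div_eq_mul_inv]

/-- In `(1 + n m) n ‖T‖ = n ‖T‖ + n² m ‖T‖` the first term is at most `1`, and the second at most
`2K` by the Abel bound `‖1 - v‖ ‖T‖ ≤ 2 / (n + 1)²`. -/
lemma natCast_mul_norm_tailSeries_le {K m : ℝ} (hn : 1 ≤ n) (hv : ‖v‖ ≤ 1) (hK : 0 ≤ K)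
    (hm0 : 0 ≤ m) (hm : m ≤ K * ‖1 - v‖) :
    n * ‖tailSeries n v‖ ≤ (1 + 2 * K) / (1 + n * m) := by
  set s := ‖tailSeries n v‖
  have hx : (1 : ℝ) ≤ n := by exact_mod_cast hn
  have hs : 0 ≤ s := norm_nonneg _
  have htriv := natCast_mul_norm_tailSeries_le_one hn hv
  have habel := norm_one_sub_mul_norm_tailSeries_le n hv
  have hms : m * s ≤ 2 * K / ((n : ℝ) + 1) ^ 2 := by
    calc m * s ≤ K * (‖1 - v‖ * s) := by nlinarith
      _ ≤ K * (2 / ((n : ℝ) + 1) ^ 2) := by gcongr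
      _ = 2 * K / ((n : ℝ) + 1) ^ 2 := by ring
  have hsq : (n : ℝ) ^ 2 * (m * s) ≤ 2 * K := by
    calc (n : ℝ) ^ 2 * (m * s) ≤ ((n : ℝ) + 1) ^ 2 * (2 * K / ((n : ℝ) + 1) ^ 2) := by
          exact mul_le_mul (by nlinarith) hms (by positivity) (by positivity)
      _ = 2 * K := by field_simp
  rw [le_div_iff₀ (by positivity)]
  nlinarith

lemma norm_natCast_mul_tailSeries_one_sub_one_le (hn : 1 ≤ n) :
    ‖n * tailSeries n 1 - 1‖ ≤ 1 / ((n : ℝ) + 1) := by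
  have hx : (0 : ℝ) < n := by exact_mod_cast hn
  have hupper := tsum_tailCoeff_le hn
  have hlower := one_div_succ_le_tsum_tailCoeff n
  have hreal : (n : ℂ) * tailSeries n 1 - 1 = ((n * ∑' j, tailCoeff n j - 1 : ℝ) : ℂ) := by
    simp [tailSeries, Complex.ofReal_tsum]
  rw [hreal, Complex.norm_real, Real.norm_eq_abs, abs_le]
  constructor
  · have : (n : ℝ) * (1 / (n + 1)) ≤ n * ∑' j, tailCoeff n j := by gcongr
    have e : (n : ℝ) * (1 / (n + 1)) = 1 - 1 / (n + 1) := by field_simp; ring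
    linarith
  · have : (n : ℝ) * ∑' j, tailCoeff n j ≤ n * (1 / n) := by gcongr
    have e : (n : ℝ) * (1 / n) = 1 := by field_simp
    have : (0 : ℝ) ≤ 1 / (n + 1) := by positivity
    linarith

end TailSeries

lemma W_eq_tailSeries (n : ℕ) (τ : ℝ) :
    W n τ = (exp (I * τ) ^ (2 * (n + 1)) * tailSeries n (exp (I * τ) ^ 2)
      - 2 * exp (I * τ) ^ (n + 1) * tailSeries n (exp (I * τ)) + tailSeries n 1) / 2 := by
  have hu : ‖exp (I * τ)‖ = 1 := norm_exp_I_mul_ofReal τ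
  have hu2 : ‖exp (I * τ) ^ 2‖ ≤ 1 := by rw [norm_pow, hu, one_pow]
  have hcombo := ((((hasSum_tailSeries n hu2).mul_left (exp (I * τ) ^ (2 * (n + 1)))).sub
    ((hasSum_tailSeries n hu.le).mul_left (2 * exp (I * τ) ^ (n + 1)))).add
    (hasSum_tailSeries n (norm_one (α := ℂ)).le)).div_const 2
  refine ((hasSum_nat_add_iff' (n + 1)).mp ?_).tsum_eq
  rw [Finset.sum_eq_zero fun k hk => if_neg (by rw [Finset.mem_range] at hk; omega), sub_zero]
  refine hcombo.congr_fun fun j => ?_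
  rw [if_pos (by omega), show I * ((j + (n + 1) : ℕ) : ℂ) * τ = (j + (n + 1) : ℕ) * (I * τ) by ring,
    Complex.exp_nat_mul, tailCoeff]
  have hk : (n : ℂ) + 1 + j ≠ 0 := by exact_mod_cast (by omega : n + 1 + j ≠ 0)
  push_cast
  rw [show (j : ℂ) + (n + 1) = n + 1 + j by ring]
  field_simp
  ring

lemma norm_two_mul_W_sub_one_le (n : ℕ) (τ : ℝ) :
    ‖2 * n * W n τ - 1‖ ≤ n * ‖tailSeries n (exp (I * τ) ^ 2)‖
      + 2 * (n * ‖tailSeries n (exp (I * τ))‖) + ‖n * tailSeries n 1 - 1‖ := by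
  have hu : ‖exp (I * τ)‖ = 1 := norm_exp_I_mul_ofReal τ
  rw [W_eq_tailSeries]
  calc _ = ‖(n * exp (I * τ) ^ (2 * (n + 1)) * tailSeries n (exp (I * τ) ^ 2)
        - 2 * n * exp (I * τ) ^ (n + 1) * tailSeries n (exp (I * τ)))
        + (n * tailSeries n 1 - 1)‖ := by congr 1; ring
    _ ≤ _ := by
      refine (norm_add_le _ _).trans (add_le_add ((norm_sub_le _ _).trans_eq ?_) le_rfl)
      simp only [Complex.norm_mul, RCLike.norm_natCast, norm_pow, hu, one_pow, mul_one, norm_ofNat,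
        add_right_inj]
      ring

lemma abs_le_pi_div_two_mul_norm_one_sub_exp {τ : ℝ} (hτ : |τ| ≤ π) :
    |τ| ≤ π / 2 * ‖1 - exp (I * τ)‖ := by
  have hjordan := Real.mul_abs_le_abs_sin (x := τ / 2) (by rw [abs_div]; norm_num; linarith)
  rw [norm_sub_rev, norm_exp_I_mul_ofReal_sub_one, norm_mul, Real.norm_eq_abs, Real.norm_eq_abs,
    abs_two, abs_div, abs_two] at *
  have hpi := Real.pi_pos
  rw [div_mul_div_comm, div_le_iff₀ (by positivity)] at hjordan
  nlinarith

lemma min_abs_pi_sub_abs_mem_Icc {τ : ℝ} (hτ : |τ| ≤ π) :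
    min |τ| (π - |τ|) ∈ Set.Icc 0 (π / 2) := by
  refine ⟨le_min (abs_nonneg τ) (by linarith), ?_⟩
  rcases le_total |τ| (π / 2) with h | h
  · exact (min_le_left _ _).trans h
  · exact (min_le_right _ _).trans (by linarith)

lemma min_le_pi_div_two_mul_norm_one_sub_exp_sq {τ : ℝ} (hτ : |τ| ≤ π) :
    min |τ| (π - |τ|) ≤ π / 2 * ‖1 - exp (I * τ) ^ 2‖ := by
  set m := min |τ| (π - |τ|)
  obtain ⟨hm0, hm⟩ := min_abs_pi_sub_abs_mem_Icc hτ
  have hsin : |Real.sin τ| = Real.sin m := by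
    rw [Real.abs_sin_eq_sin_abs_of_abs_le_pi hτ]
    rcases min_choice |τ| (π - |τ|) with h | h <;> simp only [m, h, Real.sin_pi_sub]
  have hnorm : ‖1 - exp (I * τ) ^ 2‖ = 2 * Real.sin m := by
    rw [norm_sub_rev, ← Complex.exp_nat_mul, show ((2 : ℕ) : ℂ) * (I * τ) = I * ((2 * τ : ℝ) : ℂ) by
      push_cast; ring, norm_exp_I_mul_ofReal_sub_one, norm_mul, Real.norm_eq_abs, Real.norm_eq_abs,
      abs_two, mul_div_cancel_left₀ τ two_ne_zero, hsin]
  have hjordan := Real.mul_le_sin hm0 hm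
  have hpi := Real.pi_pos
  rw [hnorm, div_mul_eq_mul_div, div_le_iff₀ hpi] at *
  nlinarith

theorem Wn_asymptotics :
    ∃ C : ℝ, ∀ n : ℕ, 1 ≤ n → ∀ τ : ℝ, |τ| ≤ Real.pi →
      ‖(2 * n * W n τ - 1 : ℂ)‖ ≤
        C / (1 + n * min |τ| (Real.pi - |τ|)) := by
  refine ⟨4 * (1 + π), fun n hn τ hτ => ?_⟩
  set m := min |τ| (π - |τ|)
  obtain ⟨hm0, hm⟩ := min_abs_pi_sub_abs_mem_Icc hτ
  have hu : ‖exp (I * τ)‖ ≤ 1 := (norm_exp_I_mul_ofReal τ).le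
  have hu2 : ‖exp (I * τ) ^ 2‖ ≤ 1 := by rw [norm_pow]; exact pow_le_one₀ (norm_nonneg _) hu
  have hK : 0 ≤ π / 2 := by positivity
  have hsq := natCast_mul_norm_tailSeries_le hn hu2 hK hm0
    (min_le_pi_div_two_mul_norm_one_sub_exp_sq hτ)
  have hlin := natCast_mul_norm_tailSeries_le hn hu hK hm0
    ((min_le_left _ _).trans (abs_le_pi_div_two_mul_norm_one_sub_exp hτ))
  have hconst : ‖n * tailSeries n 1 - 1‖ ≤ (1 + 2 * (π / 2)) / (1 + n * m) := by
    refine (norm_natCast_mul_tailSeries_one_sub_one_le hn).trans ?_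
    rw [div_le_div_iff₀ (by positivity) (by positivity)]
    nlinarith [Real.pi_pos]
  calc ‖(2 * n * W n τ - 1 : ℂ)‖
      ≤ n * ‖tailSeries n (exp (I * τ) ^ 2)‖ + 2 * (n * ‖tailSeries n (exp (I * τ))‖)
        + ‖n * tailSeries n 1 - 1‖ := norm_two_mul_W_sub_one_le n τ
    _ ≤ (1 + 2 * (π / 2)) / (1 + n * m) + 2 * ((1 + 2 * (π / 2)) / (1 + n * m))
        + (1 + 2 * (π / 2)) / (1 + n * m) := by gcongr
    _ = 4 * (1 + π) / (1 + n * m) := by ring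
end

section
/- Fix u ≥ 1, a sequence ε_n ≥ 0 tending to 0, and a strictly increasing sequence of integers {m_n}_{n≥1} with m_n = u·n + O(ε_n·n). Then there exists n₀ such that for all n ≥ n₀ and all integers ν with (u+1)·n/(u+2) < ν < n, one has P(T_n − T_ν = m_n − m_ν) = 0. -/
/-
The event is empty. The increment `T n - T ν = ∑_{ν < k ≤ n} k Z_k` is a sum of multiples of
integers larger than `ν`, so it is either `0` or larger than `ν`. On the other hand `m` is
strictly increasing, so `m n - m ν > 0`, and `m n - m ν = u (n - ν) + o(n)`; the constraint
`(u + 1) n < (u + 2) ν` leaves room `n / (u + 2)` for the error term and gives `m n - m ν < ν`.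
-/

open MeasureTheory ProbabilityTheory Filter Finset

open Asymptotics

lemma sum_mul_eq_zero_or_lt {s : Finset ℕ} {ν : ℕ} (hs : ∀ k ∈ s, ν < k) (f : ℕ → ℕ) :
    ∑ k ∈ s, k * f k = 0 ∨ ν < ∑ k ∈ s, k * f k := by
  by_cases hzero : ∀ k ∈ s, f k = 0
  · exact .inl (sum_eq_zero fun k hk => by rw [hzero k hk, mul_zero])
  obtain ⟨k, hk, hfk⟩ : ∃ k ∈ s, f k ≠ 0 := by simpa using hzero
  refine .inr ?_
  calc ν < k := hs k hk
    _ ≤ k * f k := Nat.le_mul_of_pos_right k (Nat.pos_of_ne_zero hfk)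
    _ ≤ ∑ i ∈ s, i * f i := single_le_sum (f := fun i => i * f i) (fun _ _ => Nat.zero_le _) hk

lemma T_eq_T_add_sum_Ioc {Ω : Type*} (Z : ℕ → Ω → ℕ) {ν n : ℕ} (hνn : ν ≤ n) (ω : Ω) :
    T Z n ω = T Z ν ω + ∑ k ∈ Ioc ν n, k * Z k ω := by
  have hIcc (r : ℕ) : Icc 1 r = Ioc 0 r := Icc_add_one_left_eq_Ioc 0 r
  rw [T, T, hIcc, hIcc]
  exact (sum_Ioc_consecutive _ (Nat.zero_le ν) hνn).symm

lemma T_sub_T_ne {Ω : Type*} (Z : ℕ → Ω → ℕ) {ν n : ℕ} (hνn : ν ≤ n) {d : ℤ}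
    (hd_pos : 0 < d) (hd_le : d ≤ ν) (ω : Ω) : (T Z n ω : ℤ) - T Z ν ω ≠ d := by
  rw [T_eq_T_add_sum_Ioc Z hνn ω, Nat.cast_add, add_sub_cancel_left]
  rcases sum_mul_eq_zero_or_lt (s := Ioc ν n) (fun k hk => (mem_Ioc.1 hk).1) (Z · ω)
    with h | h <;> omega

lemma isLittleO_of_abs_le_mul {ε : ℕ → ℝ} (hε : Tendsto ε atTop (nhds 0)) {f : ℕ → ℝ} {K : ℝ}
    (hf : ∀ n : ℕ, 1 ≤ n → |f n| ≤ K * (ε n * n)) : f =o[atTop] fun n => (n : ℝ) := by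
  have hbig : f =O[atTop] fun n => ε n * n :=
    .of_bound |K| (eventually_atTop.2 ⟨1, fun n hn =>
      (hf n hn).trans ((le_abs_self _).trans (abs_mul _ _).le)⟩)
  have hsmall : (fun n => ε n * n) =o[atTop] fun n => (1 : ℝ) * n :=
    ((isLittleO_one_iff ℝ).2 hε).mul_isBigO (isBigO_refl _ _)
  simpa using hbig.trans_isLittleO hsmall

lemma sub_lt_of_abs_sub_mul_le {u δ a b x y : ℝ} (hu : 0 ≤ u) (hδ : 2 * δ * (u + 2) = 1)
    (ha : |a - u * x| ≤ δ * x) (hb : |b - u * y| ≤ δ * y) (hyx : y < x)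
    (hxy : (u + 1) * x < (u + 2) * y) : a - b < y := by
  have hy : 0 < y := by nlinarith
  have hδ_pos : 0 < δ := by nlinarith
  have ha' := (abs_le.1 ha).2
  have hb' := (abs_le.1 hb).1
  have herr : a - b < u * (x - y) + 2 * δ * x := by nlinarith
  nlinarith [mul_le_mul_of_nonneg_left hxy.le hu]

theorem correlation_event_impossible_general
    {Ω : Type*} [MeasureSpace Ω]
    (Z : ℕ → Ω → ℕ)
    (u : ℝ) (hu : 1 ≤ u)
    (ε : ℕ → ℝ) (hεlim : Tendsto ε atTop (nhds 0))
    (m : ℕ → ℤ) (hmono : ∀ n : ℕ, 1 ≤ n → m n < m (n + 1))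
    (hm : ∃ K : ℝ, ∀ n : ℕ, 1 ≤ n → |(m n : ℝ) - u * n| ≤ K * (ε n * n)) :
    ∃ n₀ : ℕ, ∀ n : ℕ, n₀ ≤ n → ∀ ν : ℕ, 1 ≤ ν →
      (u + 1) * n / (u + 2) < (ν : ℝ) → ν < n →
      ℙ {ω | (T Z n ω : ℤ) - (T Z ν ω : ℤ) = m n - m ν} = 0 := by
  obtain ⟨K, hK⟩ := hm
  set δ : ℝ := 1 / (2 * (u + 2))
  have hδ : 2 * δ * (u + 2) = 1 := by
    simp only [δ]; field_simp
  obtain ⟨N, hN⟩ := eventually_atTop.1 ((isLittleO_of_abs_le_mul hεlim hK).bound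
    (by positivity : 0 < δ))
  simp only [Real.norm_eq_abs, Nat.abs_cast] at hN
  refine ⟨2 * N, fun n hn ν hν hνlo hνn => ?_⟩
  have hνlo' : (u + 1) * n < (u + 2) * ν := by
    rw [div_lt_iff₀ (by linarith)] at hνlo; linarith
  have hNν : N ≤ ν := by
    have : (n : ℝ) < 2 * ν := by nlinarith
    have : n < 2 * ν := by exact_mod_cast this
    omega
  have hlt : m n - m ν < ν := by
    have := sub_lt_of_abs_sub_mul_le (by linarith) hδ (hN n (by omega)) (hN ν hNν)
      (by exact_mod_cast hνn) hνlo'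
    exact_mod_cast this
  have hpos : 0 < m n - m ν :=
    sub_pos.2 (Nat.rel_of_forall_rel_succ_of_le_of_lt (· < ·) hmono hν hνn)
  have hempty : {ω | (T Z n ω : ℤ) - (T Z ν ω : ℤ) = m n - m ν} = ∅ :=
    Set.eq_empty_of_forall_notMem fun ω => T_sub_T_ne Z hνn.le hpos hlt.le ω
  rw [hempty, measure_empty]

theorem correlation_event_impossible
    {Ω : Type*} [MeasureSpace Ω] [IsProbabilityMeasure (ℙ : Measure Ω)]
    (Z : ℕ → Ω → ℕ) (hZmeas : ∀ k, Measurable (Z k))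
    (hZindep : iIndepFun Z ℙ)
    (hZ1 : ∀ k : ℕ, 1 ≤ k → ℙ {ω | Z k ω = 1} = 1 / k)
    (hZ0 : ∀ k : ℕ, 1 ≤ k → ℙ {ω | Z k ω = 0} = 1 - 1 / k)
    (u : ℝ) (hu : 1 ≤ u)
    (ε : ℕ → ℝ) (hεpos : ∀ n, 0 ≤ ε n) (hεlim : Tendsto ε atTop (nhds 0))
    (m : ℕ → ℤ) (hmono : ∀ n : ℕ, 1 ≤ n → m n < m (n + 1))
    (hm : ∃ K : ℝ, ∀ n : ℕ, 1 ≤ n → |(m n : ℝ) - u * n| ≤ K * (ε n * n)) :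
    ∃ n₀ : ℕ, ∀ n : ℕ, n₀ ≤ n → ∀ ν : ℕ, 1 ≤ ν →
      (u + 1) * n / (u + 2) < (ν : ℝ) → ν < n →
      ℙ {ω | (T Z n ω : ℤ) - (T Z ν ω : ℤ) = m n - m ν} = 0 :=
  correlation_event_impossible_general Z u hu ε hεlim m hmono hm
end

section
/- The infinite product over odd integers k ≥ 3 of (1 − 2/k)·e^{2/k} converges and equals 2·e^{γ−2}; equivalently, lim_{J→∞} Π_{j=1}^{J} (1 − 2/(2j+1))·e^{2/(2j+1)} = 2·e^{γ−2}. -/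
/-!
The factors telescope: `∏ (1 - 2/(2j+1)) = 1/(2J+1)`, while `∑ 2/(2j+1)` is the odd part of
the harmonic sum, `2 H_{2J+1} - H_J - 2`. Writing `H_n = γ_n + log (n+1)` with `γ_n → γ`, the
partial product becomes `exp (2 γ_{2J+1} - γ_J - 2) · (2 + 2/(2J+1))`, which tends to `2 e^{γ-2}`.
-/

open Filter Finset Real

lemma prod_Icc_one_sub_two_div_odd (J : ℕ) :
    ∏ j ∈ Icc 1 J, (1 - 2 / (2 * (j : ℝ) + 1)) = 1 / (2 * J + 1) := by
  induction J with
  | zero => simp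
  | succ n ih =>
    rw [prod_Icc_succ_top (by omega), ih]
    push_cast
    field_simp
    ring

lemma sum_Icc_two_div_odd (J : ℕ) :
    ∑ j ∈ Icc 1 J, 2 / (2 * (j : ℝ) + 1) = 2 * harmonic (2 * J + 1) - harmonic J - 2 := by
  induction J with
  | zero => simp [harmonic_succ]
  | succ n ih =>
    rw [sum_Icc_succ_top (by omega), ih, show 2 * (n + 1) + 1 = 2 * n + 1 + 1 + 1 by ring,
      harmonic_succ (2 * n + 1 + 1), harmonic_succ (2 * n + 1), harmonic_succ n]
    push_cast
    field_simp
    ring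

lemma prod_Icc_one_sub_two_div_odd_mul_exp (J : ℕ) :
    ∏ j ∈ Icc 1 J, (1 - 2 / (2 * (j : ℝ) + 1)) * exp (2 / (2 * (j : ℝ) + 1)) =
      exp (2 * eulerMascheroniSeq (2 * J + 1) - eulerMascheroniSeq J - 2) *
        (2 + 2 / (2 * J + 1)) := by
  rw [prod_mul_distrib, prod_Icc_one_sub_two_div_odd, ← exp_sum, sum_Icc_two_div_odd]
  have hlog : 2 * (harmonic (2 * J + 1) : ℝ) - harmonic J - 2 =
      (2 * eulerMascheroniSeq (2 * J + 1) - eulerMascheroniSeq J - 2) +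
        (2 * log (2 * J + 1 + 1) - log (J + 1)) := by
    simp only [eulerMascheroniSeq]
    push_cast
    ring
  have hexp : exp (2 * log (2 * J + 1 + 1) - log (J + 1)) = (2 * J + 1 + 1) ^ 2 / (J + 1) := by
    rw [exp_sub, two_mul, exp_add, exp_log (by positivity), exp_log (by positivity)]
    ring
  rw [hlog, exp_add, hexp]
  field_simp
  ring

theorem infinite_product_over_odd_integers :
    Tendsto (fun J : ℕ => ∏ j ∈ Finset.Icc 1 J,
        (1 - 2 / (2 * (j : ℝ) + 1)) * Real.exp (2 / (2 * (j : ℝ) + 1)))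
      atTop (nhds (2 * Real.exp (Real.eulerMascheroniConstant - 2))) := by
  have hodd : Tendsto (fun J : ℕ => 2 * J + 1) atTop atTop :=
    tendsto_atTop_mono (fun J => show J ≤ 2 * J + 1 by omega) tendsto_id
  have hγ : Tendsto (fun J : ℕ => 2 * eulerMascheroniSeq (2 * J + 1) - eulerMascheroniSeq J - 2)
      atTop (nhds (eulerMascheroniConstant - 2)) := by
    convert (((tendsto_eulerMascheroniSeq.comp hodd).const_mul 2).sub
      tendsto_eulerMascheroniSeq).sub_const 2 using 2
    · rfl
    · ring
  have hratio : Tendsto (fun J : ℕ => 2 + 2 / (2 * (J : ℝ) + 1)) atTop (nhds 2) := by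
    have hden : Tendsto (fun J : ℕ => 2 * (J : ℝ) + 1) atTop atTop :=
      tendsto_atTop_add_const_right _ 1 (tendsto_natCast_atTop_atTop.const_mul_atTop two_pos)
    simpa using (tendsto_const_nhds (x := (2 : ℝ))).add (tendsto_const_nhds.div_atTop hden)
  simp_rw [prod_Icc_one_sub_two_div_odd_mul_exp]
  simpa [mul_comm] using hγ.rexp.mul hratio
end
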